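/- Under the product test-channel structure, for any nonempty I ⊆ {1,...,M} with elements i(1) < ... < i(m), one has I(X_I; Z_I | Z_{I^c}, S) = Σ_{j=1}^m I(X_{i(j)}; Z_{i(j)} | Z_{{1,...,M}\{i(j),...,i(m)}}, S). -/
import Mathlib

open Finset

/-- Probability that a random variable `f` (on finite sample space `Ω` with pmf `μ`)
takes the value `a`. -/
noncomputable def pr {Ω : Type} [Fintype Ω] (μ : Ω → ℝ) {A : Type} [Fintype A] [DecidableEq A]
    (f : Ω → A) (a : A) : ℝ :=
  ∑ ω, if f ω = a then μ ω else 0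

/-- Shannon entropy of a finite random variable. -/
noncomputable def ent {Ω : Type} [Fintype Ω] (μ : Ω → ℝ) {A : Type} [Fintype A] [DecidableEq A]
    (f : Ω → A) : ℝ :=
  -∑ a, pr μ f a * Real.log (pr μ f a)

/-- Conditional entropy `H(f | g)`. -/
noncomputable def condEnt {Ω : Type} [Fintype Ω] (μ : Ω → ℝ) {A B : Type}
    [Fintype A] [DecidableEq A] [Fintype B] [DecidableEq B] (f : Ω → A) (g : Ω → B) : ℝ :=
  ent μ (fun ω => (f ω, g ω)) - ent μ g

/-- Mutual information `I(f ; g)`. -/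
noncomputable def mi {Ω : Type} [Fintype Ω] (μ : Ω → ℝ) {A B : Type}
    [Fintype A] [DecidableEq A] [Fintype B] [DecidableEq B] (f : Ω → A) (g : Ω → B) : ℝ :=
  ent μ f + ent μ g - ent μ (fun ω => (f ω, g ω))

/-- Conditional mutual information `I(f ; g | h)`. -/
noncomputable def cmi {Ω : Type} [Fintype Ω] (μ : Ω → ℝ) {A B C : Type}
    [Fintype A] [DecidableEq A] [Fintype B] [DecidableEq B] [Fintype C] [DecidableEq C]
    (f : Ω → A) (g : Ω → B) (h : Ω → C) : ℝ :=
  ent μ (fun ω => (f ω, h ω)) + ent μ (fun ω => (g ω, h ω))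
    - ent μ (fun ω => (f ω, g ω, h ω)) - ent μ h

section Generic

variable {Ω : Type} [Fintype Ω] (μ : Ω → ℝ)
variable {A B C D : Type} [Fintype A] [DecidableEq A] [Fintype B] [DecidableEq B]
  [Fintype C] [DecidableEq C] [Fintype D] [DecidableEq D]

lemma ent_eq (f : Ω → A) : ent μ f = ∑ a, Real.negMulLog (pr μ f a) := by
  rw [ent, ← Finset.sum_neg_distrib]
  exact Finset.sum_congr rfl fun a _ => by rw [Real.negMulLog]; ring

lemma pr_comp {e : A → B} (he : Function.Injective e) (f : Ω → A) (a : A) :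
    pr μ (fun ω => e (f ω)) (e a) = pr μ f a := by
  unfold pr; exact Finset.sum_congr rfl fun ω _ => by simp [he.eq_iff]

lemma pr_comp_notin {e : A → B} (f : Ω → A) {b : B} (hb : ∀ a, e a ≠ b) :
    pr μ (fun ω => e (f ω)) b = 0 := by
  unfold pr
  exact Finset.sum_eq_zero fun ω _ => by simp [hb (f ω)]

lemma ent_comp {e : A → B} (he : Function.Injective e) (f : Ω → A) :
    ent μ (fun ω => e (f ω)) = ent μ f := by
  rw [ent_eq, ent_eq]
  rw [← Finset.sum_subset (Finset.subset_univ (Finset.image e Finset.univ))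
    (fun b _ hb => by
      rw [pr_comp_notin μ f (fun a hea => hb (Finset.mem_image.mpr ⟨a, Finset.mem_univ a, hea⟩))]
      simp)]
  rw [Finset.sum_image (fun a _ a' _ h => he h)]
  exact Finset.sum_congr rfl fun a _ => by rw [pr_comp μ he]

lemma ent_congr (f : Ω → A) (g : Ω → B) (φ : A → B) (ψ : B → A)
    (h1 : ∀ ω, φ (f ω) = g ω) (h2 : ∀ ω, ψ (g ω) = f ω) : ent μ f = ent μ g := by
  have e1 : ent μ (fun ω => (f ω, g ω)) = ent μ f := by
    have := ent_comp μ (e := fun a : A => (a, φ a))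
      (fun a a' h => congrArg Prod.fst h) f
    simp only [h1] at this
    exact this
  have e2 : ent μ (fun ω => (f ω, g ω)) = ent μ g := by
    have := ent_comp μ (e := fun b : B => (ψ b, b))
      (fun b b' h => congrArg Prod.snd h) g
    simp only [h2] at this
    exact this
  rw [← e1, e2]

lemma pr_fst (f : Ω → A) (g : Ω → B) (a : A) :
    pr μ f a = ∑ b, pr μ (fun ω => (f ω, g ω)) (a, b) := by
  unfold pr
  rw [Finset.sum_comm]
  refine Finset.sum_congr rfl fun ω _ => ?_
  simp only [Prod.mk.injEq]
  rcases eq_or_ne (f ω) a with h | h <;> simp [h]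

lemma pr_snd (f : Ω → A) (g : Ω → B) (b : B) :
    pr μ g b = ∑ a, pr μ (fun ω => (f ω, g ω)) (a, b) := by
  unfold pr
  rw [Finset.sum_comm]
  refine Finset.sum_congr rfl fun ω _ => ?_
  simp only [Prod.mk.injEq]
  rcases eq_or_ne (g ω) b with h | h <;> simp [h]

lemma condEnt_chain (f : Ω → A) (g : Ω → B) (h : Ω → C) :
    condEnt μ (fun ω => (f ω, g ω)) h
      = condEnt μ f h + condEnt μ g (fun ω => (f ω, h ω)) := by
  unfold condEnt
  have : ent μ (fun ω => ((f ω, g ω), h ω)) = ent μ (fun ω => (g ω, (f ω, h ω))) := by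
    exact ent_congr μ _ _ (fun x => (x.1.2, (x.1.1, x.2))) (fun x => ((x.2.1, x.1), x.2.2))
      (fun ω => rfl) (fun ω => rfl)
  rw [this]; ring

lemma cmi_eq (f : Ω → A) (g : Ω → B) (h : Ω → C) :
    cmi μ f g h = condEnt μ g h - condEnt μ g (fun ω => (f ω, h ω)) := by
  unfold cmi condEnt
  have : ent μ (fun ω => (f ω, g ω, h ω)) = ent μ (fun ω => (g ω, (f ω, h ω))) := by
    exact ent_congr μ _ _ (fun x => (x.2.1, (x.1, x.2.2))) (fun x => (x.2.1, (x.1, x.2.2)))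
      (fun ω => rfl) (fun ω => rfl)
  rw [this]; ring

lemma cmi_congr (f : Ω → A) (f' : Ω → B) (g : Ω → C) (h : Ω → D)
    (φ : A → B) (ψ : B → A) (h1 : ∀ ω, φ (f ω) = f' ω) (h2 : ∀ ω, ψ (f' ω) = f ω) :
    cmi μ f g h = cmi μ f' g h := by
  unfold cmi
  rw [ent_congr μ (fun ω => (f ω, h ω)) (fun ω => (f' ω, h ω))
      (fun x => (φ x.1, x.2)) (fun x => (ψ x.1, x.2)) (fun ω => by simp [h1]) (fun ω => by simp [h2]),
    ent_congr μ (fun ω => (f ω, g ω, h ω)) (fun ω => (f' ω, g ω, h ω))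
      (fun x => (φ x.1, x.2)) (fun x => (ψ x.1, x.2)) (fun ω => by simp [h1]) (fun ω => by simp [h2])]

lemma condEnt_congr (f : Ω → A) (f' : Ω → B) (h : Ω → C) (h' : Ω → D)
    (φf : A → B) (ψf : B → A) (hf1 : ∀ ω, φf (f ω) = f' ω) (hf2 : ∀ ω, ψf (f' ω) = f ω)
    (φh : C → D) (ψh : D → C) (hh1 : ∀ ω, φh (h ω) = h' ω) (hh2 : ∀ ω, ψh (h' ω) = h ω) :
    condEnt μ f h = condEnt μ f' h' := by
  unfold condEnt
  rw [ent_congr μ (fun ω => (f ω, h ω)) (fun ω => (f' ω, h' ω))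
      (fun x => (φf x.1, φh x.2)) (fun x => (ψf x.1, ψh x.2))
      (fun ω => by simp [hf1, hh1]) (fun ω => by simp [hf2, hh2]),
    ent_congr μ h h' φh ψh hh1 hh2]

lemma cmi_unique (f : Ω → A) (g : Ω → B) (h : Ω → C) [Unique A] :
    cmi μ f g h = 0 := by
  unfold cmi
  rw [ent_congr μ (fun ω => (f ω, h ω)) h (fun x => x.2) (fun c => (default, c))
      (fun ω => rfl) (fun ω => by simp [Subsingleton.elim (default : A) (f ω)]),
    ent_congr μ (fun ω => (f ω, g ω, h ω)) (fun ω => (g ω, h ω)) (fun x => x.2)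
      (fun c => (default, c)) (fun ω => rfl)
      (fun ω => by simp [Subsingleton.elim (default : A) (f ω)])]
  ring

lemma condEnt_of_kernel (f : Ω → A) (g : Ω → B) (h : Ω → C) (k : B → A → ℝ)
    (hfac : ∀ a b c, pr μ (fun ω => (f ω, (g ω, h ω))) (a, (b, c))
      = k b a * pr μ (fun ω => (g ω, h ω)) (b, c)) :
    condEnt μ f (fun ω => (g ω, h ω))
      = ∑ b, pr μ g b * ∑ a, Real.negMulLog (k b a) := by
  set P := pr μ (fun ω => (g ω, h ω)) with hP
  have hsum : ∀ b c, P (b, c) ≠ 0 → (∑ a, k b a) = 1 := by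
    intro b c hne
    have := pr_snd μ f (fun ω => (g ω, h ω)) (b, c)
    rw [Finset.sum_congr rfl (fun a _ => hfac a b c), ← Finset.sum_mul] at this
    exact mul_right_cancel₀ hne (by rw [← this, one_mul])
  unfold condEnt
  rw [ent_eq, ent_eq]
  rw [Fintype.sum_prod_type]
  have key : ∀ a : A, ∑ bc : B × C, Real.negMulLog (pr μ (fun ω => (f ω, (g ω, h ω))) (a, bc))
      = (∑ bc : B × C, P bc * Real.negMulLog (k bc.1 a))
        + ∑ bc : B × C, k bc.1 a * Real.negMulLog (P bc) := by
    intro a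
    rw [← Finset.sum_add_distrib]
    refine Finset.sum_congr rfl fun bc _ => ?_
    rw [show (a, bc) = (a, (bc.1, bc.2)) by rfl, hfac a bc.1 bc.2, Real.negMulLog_mul]
  calc (∑ a, ∑ bc : B × C, Real.negMulLog (pr μ (fun ω => (f ω, (g ω, h ω))) (a, bc)))
        - ∑ bc, Real.negMulLog (P bc)
      = (∑ a, ∑ bc : B × C, P bc * Real.negMulLog (k bc.1 a))
        + ((∑ a, ∑ bc : B × C, k bc.1 a * Real.negMulLog (P bc))
          - ∑ bc, Real.negMulLog (P bc)) := by
        rw [Finset.sum_congr rfl (fun a _ => key a), Finset.sum_add_distrib]; ring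
    _ = ∑ a, ∑ bc : B × C, P bc * Real.negMulLog (k bc.1 a) := by
        have h2 : (∑ a, ∑ bc : B × C, k bc.1 a * Real.negMulLog (P bc))
            = ∑ bc : B × C, Real.negMulLog (P bc) := by
          rw [Finset.sum_comm]
          refine Finset.sum_congr rfl fun bc _ => ?_
          rw [← Finset.sum_mul]
          rcases eq_or_ne (P bc) 0 with h0 | h0
          · simp [h0]
          · rw [hsum bc.1 bc.2 h0, one_mul]
        rw [h2]; ring
    _ = ∑ bc : B × C, P bc * ∑ a, Real.negMulLog (k bc.1 a) := by
        rw [Finset.sum_comm]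
        exact Finset.sum_congr rfl fun bc _ => (Finset.mul_sum _ _ _).symm
    _ = ∑ b, ∑ c, P (b, c) * ∑ a, Real.negMulLog (k b a) := by
        rw [Fintype.sum_prod_type]
    _ = ∑ b, pr μ g b * ∑ a, Real.negMulLog (k b a) := by
        refine Finset.sum_congr rfl fun b _ => ?_
        rw [pr_fst μ g h b, Finset.sum_mul]

end Generic

section ProductStructure

variable {M : ℕ} {𝒳 𝒵 : Fin M → Type} {𝒮 : Type}

/-- Sample space for the multiterminal setup: sources, side information, auxiliaries. -/
abbrev Samp (𝒳 𝒵 : Fin M → Type) (𝒮 : Type) := ((∀ i, 𝒳 i) × 𝒮) × (∀ i, 𝒵 i)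

/-- The joint pmf `p(x_{1..M}, s) ∏ₖ qₖ(z_k | x_k)` (product test-channel structure). -/
noncomputable def jointPMF (p : (∀ i, 𝒳 i) × 𝒮 → ℝ) (q : ∀ i, 𝒳 i → 𝒵 i → ℝ) :
    Samp 𝒳 𝒵 𝒮 → ℝ :=
  fun ω => p ω.1 * ∏ i, q i (ω.1.1 i) (ω.2 i)

/-- The tuple `X_I` of source variables indexed by `I`. -/
def XI (I : Finset (Fin M)) : Samp 𝒳 𝒵 𝒮 → ∀ i : I, 𝒳 i := fun ω i => ω.1.1 i

/-- The tuple `Z_I` of auxiliary variables indexed by `I`. -/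
def ZI (I : Finset (Fin M)) : Samp 𝒳 𝒵 𝒮 → ∀ i : I, 𝒵 i := fun ω i => ω.2 i

/-- The side information variable `S`. -/
def Sv : Samp 𝒳 𝒵 𝒮 → 𝒮 := fun ω => ω.1.2

end ProductStructure

section Tuples

variable {M : ℕ} {𝒴 : Fin M → Type}

def restr {A B : Finset (Fin M)} (hAB : A ⊆ B) (u : ∀ j : B, 𝒴 j) : ∀ j : A, 𝒴 j :=
  fun j => u ⟨j, hAB j.2⟩

def glue {A B C : Finset (Fin M)} (hC : C ⊆ A ∪ B) (u : ∀ j : A, 𝒴 j) (v : ∀ j : B, 𝒴 j) :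
    ∀ j : C, 𝒴 j :=
  fun j => if h : (j : Fin M) ∈ A then u ⟨j, h⟩ else
    v ⟨j, by rcases Finset.mem_union.mp (hC j.2) with h' | h'; exact absurd h' h; exact h'⟩

def mk1 (i : Fin M) (a : 𝒴 i) : ∀ j : ({i} : Finset (Fin M)), 𝒴 j :=
  fun j => cast (congrArg 𝒴 (Finset.mem_singleton.mp j.2).symm) a

def ev1 (i : Fin M) (u : ∀ j : ({i} : Finset (Fin M)), 𝒴 j) : 𝒴 i :=
  u ⟨i, Finset.mem_singleton_self i⟩

end Tuples

section Facts

variable {M : ℕ} {𝒳 𝒵 : Fin M → Type} {𝒮 : Type}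
  [∀ i, Fintype (𝒳 i)] [∀ i, DecidableEq (𝒳 i)]
  [∀ i, Fintype (𝒵 i)] [∀ i, DecidableEq (𝒵 i)] [Fintype 𝒮] [DecidableEq 𝒮]

lemma restr_ZI {A B : Finset (Fin M)} (hAB : A ⊆ B) (ω : Samp 𝒳 𝒵 𝒮) :
    restr hAB (ZI B ω) = ZI A ω := rfl

lemma restr_XI {A B : Finset (Fin M)} (hAB : A ⊆ B) (ω : Samp 𝒳 𝒵 𝒮) :
    restr hAB (XI B ω) = XI A ω := rfl

lemma glue_ZI {A B C : Finset (Fin M)} (hC : C ⊆ A ∪ B) (ω : Samp 𝒳 𝒵 𝒮) :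
    glue hC (ZI A ω) (ZI B ω) = ZI C ω := by
  funext j; unfold glue ZI; split <;> rfl

lemma glue_XI {A B C : Finset (Fin M)} (hC : C ⊆ A ∪ B) (ω : Samp 𝒳 𝒵 𝒮) :
    glue hC (XI A ω) (XI B ω) = XI C ω := by
  funext j; unfold glue XI; split <;> rfl

lemma mk1_ZI (i : Fin M) (ω : Samp 𝒳 𝒵 𝒮) : mk1 i (ω.2 i) = ZI {i} ω := by
  funext j
  rcases j with ⟨j, hj⟩
  have hji : j = i := Finset.mem_singleton.mp hj
  subst hji
  exact cast_eq_iff_heq.mpr HEq.rfl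

lemma mk1_XI (i : Fin M) (ω : Samp 𝒳 𝒵 𝒮) : mk1 i (ω.1.1 i) = XI {i} ω := by
  funext j
  rcases j with ⟨j, hj⟩
  have hji : j = i := Finset.mem_singleton.mp hj
  subst hji
  exact cast_eq_iff_heq.mpr HEq.rfl

lemma ev1_ZI (i : Fin M) (ω : Samp 𝒳 𝒵 𝒮) : ev1 i (ZI {i} ω) = ω.2 i := rfl

lemma ev1_XI (i : Fin M) (ω : Samp 𝒳 𝒵 𝒮) : ev1 i (XI {i} ω) = ω.1.1 i := rfl


lemma sum_pi_prod {ι : Type} [Fintype ι] [DecidableEq ι] {κ : ι → Type} [∀ i, Fintype (κ i)]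
    (f : ∀ i, κ i → ℝ) (hf : ∀ i, ∑ x, f i x = 1) :
    ∑ u : ∀ i, κ i, ∏ i, f i (u i) = 1 := by
  classical
  rw [← Fintype.piFinset_univ]
  rw [← Finset.prod_univ_sum (fun i => (Finset.univ : Finset (κ i))) f]
  rw [Finset.prod_congr rfl fun i _ => hf i]
  exact Finset.prod_const_one

lemma prod_split {ι : Type} [Fintype ι] (pp : ι → Prop) [DecidablePred pp]
    [inst1 : Fintype {x // pp x}] [inst2 : Fintype {x // ¬ pp x}] (f : ι → ℝ) :
    ∏ i, f i = (∏ j : {x // pp x}, f ↑j) * ∏ j : {x // ¬ pp x}, f ↑j := by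
  rw [← Fintype.prod_subtype_mul_prod_subtype pp f]
  congr 1
  · exact Finset.prod_congr (by congr!) fun j _ => rfl
  · exact Finset.prod_congr (by congr!) fun j _ => rfl

lemma sum_samp (J : Finset (Fin M)) (F : Samp 𝒳 𝒵 𝒮 → ℝ) :
    ∑ ω, F ω = ∑ xs : (∀ i, 𝒳 i) × 𝒮, ∑ u : ∀ j : {x // x ∈ J}, 𝒵 j,
      ∑ v : ∀ j : {x // ¬ x ∈ J}, 𝒵 j,
      F (xs, (Equiv.piEquivPiSubtypeProd (· ∈ J) 𝒵).symm (u, v)) := by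
  rw [Fintype.sum_prod_type]
  refine Finset.sum_congr rfl fun xs _ => ?_
  rw [← Equiv.sum_comp (Equiv.piEquivPiSubtypeProd (· ∈ J) 𝒵).symm (fun z => F (xs, z)),
    Fintype.sum_prod_type]

lemma fac (p : (∀ i, 𝒳 i) × 𝒮 → ℝ) (q : ∀ i, 𝒳 i → 𝒵 i → ℝ)
    (hq1 : ∀ i x, ∑ z, q i x z = 1) (J : Finset (Fin M)) {C : Type} [Fintype C] [DecidableEq C]
    (h : Samp 𝒳 𝒵 𝒮 → C)
    (hdep : ∀ xs (z z' : ∀ i, 𝒵 i), (∀ j, j ∉ J → z j = z' j) → h (xs, z) = h (xs, z'))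
    (a : ∀ j : J, 𝒵 j) (b : ∀ j : J, 𝒳 j) (c : C) :
    pr (jointPMF p q) (fun ω => (ZI J ω, (XI J ω, h ω))) (a, (b, c))
      = (∏ j : J, q j (b j) (a j)) * pr (jointPMF p q) (fun ω => (XI J ω, h ω)) (b, c) := by
  classical
  have hz_in : ∀ (u : ∀ j : {x // x ∈ J}, 𝒵 j) (v : ∀ j : {x // ¬ x ∈ J}, 𝒵 j)
      (j : {x // x ∈ J}), (Equiv.piEquivPiSubtypeProd (· ∈ J) 𝒵).symm (u, v) ↑j = u j := by
    intro u v j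
    rw [Equiv.piEquivPiSubtypeProd_symm_apply, dif_pos j.2]
  have hz_out : ∀ (u : ∀ j : {x // x ∈ J}, 𝒵 j) (v : ∀ j : {x // ¬ x ∈ J}, 𝒵 j)
      (j : Fin M) (hj : ¬ j ∈ J),
      (Equiv.piEquivPiSubtypeProd (· ∈ J) 𝒵).symm (u, v) j = v ⟨j, hj⟩ := by
    intro u v j hj
    rw [Equiv.piEquivPiSubtypeProd_symm_apply, dif_neg hj]
  simp only [pr, Prod.mk.injEq]
  rw [sum_samp J, sum_samp J, Finset.mul_sum]
  refine Finset.sum_congr rfl fun xs _ => ?_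
  set ee := (Equiv.piEquivPiSubtypeProd (· ∈ J) 𝒵).symm with hee
  have hZI : ∀ u v, ZI J (xs, ee (u, v)) = u := by
    intro u v; funext j
    exact hz_in u v j
  have hh : ∀ u u' v, h (xs, ee (u, v)) = h (xs, ee (u', v)) := fun u u' v =>
    hdep xs _ _ (fun j hj => by rw [hee]; rw [hz_out u v j hj, hz_out u' v j hj])
  set ku : (∀ j : {x // x ∈ J}, 𝒵 j) → ℝ := fun u => ∏ j : {x // x ∈ J}, q ↑j (xs.1 ↑j) (u j)
    with hku
  set pv : (∀ j : {x // ¬ x ∈ J}, 𝒵 j) → ℝ := fun v => ∏ j : {x // ¬ x ∈ J}, q ↑j (xs.1 ↑j) (v j)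
    with hpv
  have hjoint : ∀ u v, jointPMF p q (xs, ee (u, v)) = p xs * (ku u * pv v) := by
    intro u v
    show p xs * (∏ i, q i (xs.1 i) (ee (u, v) i)) = _
    congr 1
    rw [prod_split (· ∈ J) (fun i => q i (xs.1 i) (ee (u, v) i)), hku, hpv]
    congr 1
    · exact Finset.prod_congr rfl fun j _ => by rw [hz_in u v j]
    · exact Finset.prod_congr rfl fun j _ => by rw [hz_out u v ↑j j.2]
  have hsumu : ∑ u, ku u = 1 := by
    rw [hku]
    exact sum_pi_prod (fun j : {x // x ∈ J} => fun z => q ↑j (xs.1 ↑j) z)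
      (fun j => hq1 (↑j) (xs.1 ↑j))
  have hXb : ∀ u v, (XI J (xs, ee (u, v)) = b) = ((fun j : {x // x ∈ J} => xs.1 ↑j) = b) := by
    intro u v; rfl
  have LHSeq : (∑ u, ∑ v, if ZI J (xs, ee (u, v)) = a ∧ XI J (xs, ee (u, v)) = b
        ∧ h (xs, ee (u, v)) = c then jointPMF p q (xs, ee (u, v)) else 0)
      = ∑ v, if (fun j : {x // x ∈ J} => xs.1 ↑j) = b ∧ h (xs, ee (a, v)) = c then
          p xs * (ku a * pv v) else 0 := by
    rw [Finset.sum_comm]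
    refine Finset.sum_congr rfl fun v _ => ?_
    rw [Finset.sum_eq_single_of_mem a (Finset.mem_univ a) (fun u _ hu => by
      rw [if_neg]
      rw [hZI u v]
      exact fun hcon => hu hcon.1)]
    rw [hjoint a v]
    refine if_congr ?_ rfl rfl
    rw [hZI a v, hXb a v]
    simp
  have RHSeq : (∑ u, ∑ v, if XI J (xs, ee (u, v)) = b ∧ h (xs, ee (u, v)) = c then
        jointPMF p q (xs, ee (u, v)) else 0)
      = ∑ v, if (fun j : {x // x ∈ J} => xs.1 ↑j) = b ∧ h (xs, ee (a, v)) = c then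
          p xs * pv v else 0 := by
    rw [Finset.sum_comm]
    refine Finset.sum_congr rfl fun v _ => ?_
    have key : ∀ u, (if XI J (xs, ee (u, v)) = b ∧ h (xs, ee (u, v)) = c then
          jointPMF p q (xs, ee (u, v)) else 0)
        = (if (fun j : {x // x ∈ J} => xs.1 ↑j) = b ∧ h (xs, ee (a, v)) = c then
            p xs * pv v else 0) * ku u := by
      intro u
      rw [hjoint u v]
      by_cases hc : ((fun j : {x // x ∈ J} => xs.1 ↑j) = b ∧ h (xs, ee (a, v)) = c)
      · rw [if_pos hc, if_pos ?_]
        · ring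
        · rw [hXb u v, hh u a v]
          exact hc
      · rw [if_neg ?_, if_neg hc, zero_mul]
        rw [hXb u v, hh u a v]
        exact hc
    rw [Finset.sum_congr rfl fun u _ => key u, ← Finset.mul_sum, hsumu, mul_one]
  rw [LHSeq, RHSeq, Finset.mul_sum]
  refine Finset.sum_congr rfl fun v _ => ?_
  by_cases hc : ((fun j : {x // x ∈ J} => xs.1 ↑j) = b ∧ h (xs, ee (a, v)) = c)
  · rw [if_pos hc, if_pos hc]
    have hkb : ku a = ∏ j : J, q (↑j) (b j) (a j) := by
      rw [hku]
      exact Finset.prod_congr (by congr!) fun j _ => by rw [congrFun hc.1 j]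
    rw [hkb]; ring
  · rw [if_neg hc, if_neg hc, mul_zero]

variable (p : (∀ i, 𝒳 i) × 𝒮 → ℝ) (q : ∀ i, 𝒳 i → 𝒵 i → ℝ)

/-- Canonical value of `H(Z_J | X_J)`-style conditional entropies. -/
noncomputable def cD (J : Finset (Fin M)) : ℝ :=
  condEnt (jointPMF p q) (ZI J) (fun ω => (XI J ω, ()))

lemma condEnt_eq_cD (hq1 : ∀ i x, ∑ z, q i x z = 1) (J : Finset (Fin M))
    {C : Type} [Fintype C] [DecidableEq C] (h : Samp 𝒳 𝒵 𝒮 → C)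
    (hdep : ∀ xs (z z' : ∀ i, 𝒵 i), (∀ j, j ∉ J → z j = z' j) → h (xs, z) = h (xs, z')) :
    condEnt (jointPMF p q) (ZI J) (fun ω => (XI J ω, h ω)) = cD p q J := by
  rw [condEnt_of_kernel (jointPMF p q) (ZI J) (XI J) h (fun b a => ∏ j : J, q j (b j) (a j))
      (fun a b c => fac p q hq1 J h hdep a b c)]
  rw [cD, condEnt_of_kernel (jointPMF p q) (ZI J) (XI J) (fun _ => ())
      (fun b a => ∏ j : J, q j (b j) (a j))
      (fun a b c => fac p q hq1 J (fun _ => ()) (fun _ _ _ _ => rfl) a b c)]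

lemma split (hq1 : ∀ i x, ∑ z, q i x z = 1) (I : Finset (Fin M)) (i : Fin M) (hiI : i ∈ I) :
    cmi (jointPMF p q) (XI I) (ZI I) (fun ω => (ZI Iᶜ ω, Sv ω))
      = cmi (jointPMF p q) (fun ω => ω.1.1 i) (fun ω => ω.2 i) (fun ω => (ZI Iᶜ ω, Sv ω))
        + cmi (jointPMF p q) (XI (I.erase i)) (ZI (I.erase i))
            (fun ω => (ZI (I.erase i)ᶜ ω, Sv ω)) := by
  set μ := jointPMF p q with hμ
  set I' := I.erase i with hI'
  have hsing : ({i} : Finset (Fin M)) ⊆ I := Finset.singleton_subset_iff.mpr hiI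
  have hsub : I' ⊆ I := Finset.erase_subset i I
  have hIun : I ⊆ {i} ∪ I' := by
    intro j hj
    rcases eq_or_ne j i with rfl | hne
    · exact Finset.mem_union_left _ (Finset.mem_singleton_self j)
    · exact Finset.mem_union_right _ (Finset.mem_erase.mpr ⟨hne, hj⟩)
  have hCsub : Iᶜ ⊆ I'ᶜ := fun j hj =>
    Finset.mem_compl.mpr fun hmem => Finset.mem_compl.mp hj (hsub hmem)
  have hsingC : ({i} : Finset (Fin M)) ⊆ I'ᶜ := by
    intro j hj
    rw [Finset.mem_singleton] at hj
    subst hj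
    exact Finset.mem_compl.mpr (Finset.notMem_erase j I)
  have hC'un : I'ᶜ ⊆ {i} ∪ Iᶜ := by
    intro j hj
    rcases eq_or_ne j i with rfl | hne
    · exact Finset.mem_union_left _ (Finset.mem_singleton_self j)
    · refine Finset.mem_union_right _ (Finset.mem_compl.mpr fun hjI => ?_)
      exact Finset.mem_compl.mp hj (Finset.mem_erase.mpr ⟨hne, hjI⟩)
  -- dependence facts
  have hdepW : ∀ (xs : (∀ k, 𝒳 k) × 𝒮) (z z' : ∀ k, 𝒵 k), (∀ j, j ∉ I → z j = z' j) →
      (ZI Iᶜ (xs, z), Sv (xs, z)) = (ZI Iᶜ (xs, z'), Sv (xs, z')) := by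
    intro xs z z' hzz
    have : ZI Iᶜ (xs, z) = (ZI Iᶜ (xs, z') : ∀ j : ↥(Iᶜ), 𝒵 j) :=
      funext fun j => hzz ↑j (Finset.mem_compl.mp j.2)
    rw [show (ZI Iᶜ (xs, z), Sv (xs, z)) = (ZI Iᶜ (xs, z), xs.2) from rfl, this]
    rfl
  have hdepW1 : ∀ (xs : (∀ k, 𝒳 k) × 𝒮) (z z' : ∀ k, 𝒵 k), (∀ j, j ∉ ({i} : Finset (Fin M)) → z j = z' j) →
      (ZI Iᶜ (xs, z), Sv (xs, z)) = (ZI Iᶜ (xs, z'), Sv (xs, z')) := by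
    intro xs z z' hzz
    have : ZI Iᶜ (xs, z) = (ZI Iᶜ (xs, z') : ∀ j : ↥(Iᶜ), 𝒵 j) :=
      funext fun j => hzz ↑j (fun hmem => by
        rw [Finset.mem_singleton] at hmem
        exact Finset.mem_compl.mp j.2 (hmem ▸ hiI))
    rw [show (ZI Iᶜ (xs, z), Sv (xs, z)) = (ZI Iᶜ (xs, z), xs.2) from rfl, this]
    rfl
  have hdepW' : ∀ (xs : (∀ k, 𝒳 k) × 𝒮) (z z' : ∀ k, 𝒵 k), (∀ j, j ∉ I' → z j = z' j) →
      (ZI I'ᶜ (xs, z), Sv (xs, z)) = (ZI I'ᶜ (xs, z'), Sv (xs, z')) := by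
    intro xs z z' hzz
    have : ZI I'ᶜ (xs, z) = (ZI I'ᶜ (xs, z') : ∀ j : ↥(I'ᶜ), 𝒵 j) :=
      funext fun j => hzz ↑j (Finset.mem_compl.mp j.2)
    rw [show (ZI I'ᶜ (xs, z), Sv (xs, z)) = (ZI I'ᶜ (xs, z), xs.2) from rfl, this]
    rfl
  have hdepZX : ∀ (xs : (∀ k, 𝒳 k) × 𝒮) (z z' : ∀ k, 𝒵 k), (∀ j, j ∉ I' → z j = z' j) →
      (ZI {i} (xs, z), XI {i} (xs, z)) = (ZI {i} (xs, z'), XI {i} (xs, z')) := by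
    intro xs z z' hzz
    have : ZI {i} (xs, z) = (ZI {i} (xs, z') : ∀ j : ↥({i} : Finset (Fin M)), 𝒵 j) :=
      funext fun j => hzz ↑j (by
        have : (j : Fin M) = i := Finset.mem_singleton.mp j.2
        rw [this, hI']
        exact Finset.notMem_erase i I)
    rw [this]
    rfl
  -- step (1)+(2) for I
  have h12 : cmi μ (XI I) (ZI I) (fun ω => (ZI Iᶜ ω, Sv ω))
      = condEnt μ (ZI I) (fun ω => (ZI Iᶜ ω, Sv ω)) - cD p q I := by
    rw [cmi_eq]
    congr 1
    exact condEnt_eq_cD p q hq1 I (fun ω => (ZI Iᶜ ω, Sv ω)) hdepW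
  -- step (1)+(2) for I'
  have h12' : cmi μ (XI I') (ZI I') (fun ω => (ZI I'ᶜ ω, Sv ω))
      = condEnt μ (ZI I') (fun ω => (ZI I'ᶜ ω, Sv ω)) - cD p q I' := by
    rw [cmi_eq]
    congr 1
    exact condEnt_eq_cD p q hq1 I' (fun ω => (ZI I'ᶜ ω, Sv ω)) hdepW'
  -- chain for conditional entropy
  have hC : condEnt μ (ZI I) (fun ω => (ZI Iᶜ ω, Sv ω))
      = condEnt μ (fun ω => (ZI {i} ω, ZI I' ω)) (fun ω => (ZI Iᶜ ω, Sv ω)) :=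
    condEnt_congr μ _ _ _ _
      (fun u => (restr hsing u, restr hsub u)) (fun x => glue hIun x.1 x.2)
      (fun ω => rfl) (fun ω => glue_ZI hIun ω)
      id id (fun ω => rfl) (fun ω => rfl)
  have hD : condEnt μ (fun ω => (ZI {i} ω, ZI I' ω)) (fun ω => (ZI Iᶜ ω, Sv ω))
      = condEnt μ (ZI {i}) (fun ω => (ZI Iᶜ ω, Sv ω))
        + condEnt μ (ZI I') (fun ω => (ZI {i} ω, (ZI Iᶜ ω, Sv ω))) :=
    condEnt_chain μ _ _ _
  have hE : condEnt μ (ZI I') (fun ω => (ZI {i} ω, (ZI Iᶜ ω, Sv ω)))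
      = condEnt μ (ZI I') (fun ω => (ZI I'ᶜ ω, Sv ω)) :=
    condEnt_congr μ _ _ _ _
      id id (fun ω => rfl) (fun ω => rfl)
      (fun x => (glue hC'un x.1 x.2.1, x.2.2))
      (fun y => (restr hsingC y.1, (restr hCsub y.1, y.2)))
      (fun ω => by show (glue hC'un (ZI {i} ω) (ZI Iᶜ ω), Sv ω) = _; rw [glue_ZI hC'un ω])
      (fun ω => rfl)
  -- cD splits
  have hF : cD p q I = cD p q {i} + cD p q I' := by
    have c1 : cD p q I = condEnt μ (fun ω => (ZI {i} ω, ZI I' ω)) (fun ω => (XI I ω, ())) :=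
      condEnt_congr μ _ _ _ _
        (fun u => (restr hsing u, restr hsub u)) (fun x => glue hIun x.1 x.2)
        (fun ω => rfl) (fun ω => glue_ZI hIun ω)
        id id (fun ω => rfl) (fun ω => rfl)
    have c2 : condEnt μ (fun ω => (ZI {i} ω, ZI I' ω)) (fun ω => (XI I ω, ()))
        = condEnt μ (ZI {i}) (fun ω => (XI I ω, ()))
          + condEnt μ (ZI I') (fun ω => (ZI {i} ω, (XI I ω, ()))) :=
      condEnt_chain μ _ _ _
    have c3 : condEnt μ (ZI {i}) (fun ω => (XI I ω, ()))
        = condEnt μ (ZI {i}) (fun ω => (XI {i} ω, XI I' ω)) :=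
      condEnt_congr μ _ _ _ _
        id id (fun ω => rfl) (fun ω => rfl)
        (fun x => (restr hsing x.1, restr hsub x.1))
        (fun y => (glue hIun y.1 y.2, ()))
        (fun ω => rfl)
        (fun ω => by show (glue hIun (XI {i} ω) (XI I' ω), ()) = _; rw [glue_XI hIun ω])
    have c4 : condEnt μ (ZI {i}) (fun ω => (XI {i} ω, XI I' ω)) = cD p q {i} :=
      condEnt_eq_cD p q hq1 {i} (XI I') (fun xs z z' _ => rfl)
    have c5 : condEnt μ (ZI I') (fun ω => (ZI {i} ω, (XI I ω, ())))
        = condEnt μ (ZI I') (fun ω => (XI I' ω, (ZI {i} ω, XI {i} ω))) :=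
      condEnt_congr μ _ _ _ _
        id id (fun ω => rfl) (fun ω => rfl)
        (fun x => (restr hsub x.2.1, (x.1, restr hsing x.2.1)))
        (fun y => (y.2.1, (glue hIun y.2.2 y.1, ())))
        (fun ω => rfl)
        (fun ω => by
          show (ZI {i} ω, (glue hIun (XI {i} ω) (XI I' ω), ())) = _
          rw [glue_XI hIun ω])
    have c6 : condEnt μ (ZI I') (fun ω => (XI I' ω, (ZI {i} ω, XI {i} ω))) = cD p q I' :=
      condEnt_eq_cD p q hq1 I' (fun ω => (ZI {i} ω, XI {i} ω)) hdepZX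
    rw [show cD p q I = condEnt μ (ZI I) (fun ω => (XI I ω, ())) from rfl] at c1
    rw [show cD p q I = condEnt μ (ZI I) (fun ω => (XI I ω, ())) from rfl]
    rw [c1, c2, c3, c4, c5, c6]
  -- singleton cmi
  have hG : cmi μ (fun ω => ω.1.1 i) (fun ω => ω.2 i) (fun ω => (ZI Iᶜ ω, Sv ω))
      = condEnt μ (ZI {i}) (fun ω => (ZI Iᶜ ω, Sv ω)) - cD p q {i} := by
    rw [cmi_eq]
    have g1 : condEnt μ (fun ω => ω.2 i) (fun ω => (ZI Iᶜ ω, Sv ω))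
        = condEnt μ (ZI {i}) (fun ω => (ZI Iᶜ ω, Sv ω)) :=
      condEnt_congr μ _ _ _ _
        (mk1 i) (ev1 i) (fun ω => mk1_ZI i ω) (fun ω => rfl)
        id id (fun ω => rfl) (fun ω => rfl)
    have g2 : condEnt μ (fun ω => ω.2 i) (fun ω => (ω.1.1 i, (ZI Iᶜ ω, Sv ω)))
        = condEnt μ (ZI {i}) (fun ω => (XI {i} ω, (ZI Iᶜ ω, Sv ω))) :=
      condEnt_congr μ _ _ _ _
        (mk1 i) (ev1 i) (fun ω => mk1_ZI i ω) (fun ω => rfl)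
        (fun x => (mk1 i x.1, x.2)) (fun y => (ev1 i y.1, y.2))
        (fun ω => by show (mk1 i (ω.1.1 i), (ZI Iᶜ ω, Sv ω)) = _; rw [mk1_XI i ω])
        (fun ω => rfl)
    have g3 : condEnt μ (ZI {i}) (fun ω => (XI {i} ω, (ZI Iᶜ ω, Sv ω))) = cD p q {i} :=
      condEnt_eq_cD p q hq1 {i} (fun ω => (ZI Iᶜ ω, Sv ω)) hdepW1
    rw [g1, g2, g3]
  rw [h12, h12', hC, hD, hE, hF, hG]
  ring

lemma decomp (hq1 : ∀ i x, ∑ z, q i x z = 1) (I : Finset (Fin M)) :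
    cmi (jointPMF p q) (XI I) (ZI I) (fun ω => (ZI Iᶜ ω, Sv ω)) =
      ∑ i ∈ I, cmi (jointPMF p q) (fun ω => ω.1.1 i) (fun ω => ω.2 i)
        (fun ω => (ZI (Finset.univ \ I.filter (fun j => i ≤ j)) ω, Sv ω)) := by
  induction I using Finset.strongInduction with
  | _ I ih =>
    rcases I.eq_empty_or_nonempty with rfl | hI
    · haveI : Unique (∀ j : ↥(∅ : Finset (Fin M)), 𝒳 ↑j) :=
        ⟨⟨fun j => absurd j.2 (Finset.notMem_empty _)⟩,
          fun u => funext fun j => absurd j.2 (Finset.notMem_empty _)⟩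
      rw [Finset.sum_empty]
      exact cmi_unique (jointPMF p q) (XI ∅) (ZI ∅) _
    · set i := I.min' hI with hi
      have hiI : i ∈ I := I.min'_mem hI
      rw [split p q hq1 I i hiI]
      rw [← Finset.add_sum_erase I _ hiI]
      congr 1
      · have h1 : I.filter (fun j => i ≤ j) = I :=
          Finset.filter_true_of_mem fun j hj => I.min'_le j hj
        rw [h1, ← Finset.compl_eq_univ_sdiff]
      · rw [ih (I.erase i) (Finset.erase_ssubset hiI)]
        refine Finset.sum_congr rfl fun j hj => ?_
        obtain ⟨hjne, hjI⟩ := Finset.mem_erase.mp hj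
        have hij : ¬ j ≤ i := fun hle => hjne (le_antisymm hle (I.min'_le j hjI))
        have h2 : (I.erase i).filter (fun k => j ≤ k) = I.filter (fun k => j ≤ k) := by
          rw [Finset.filter_erase]
          exact Finset.erase_eq_of_notMem (by simp [Finset.mem_filter, hij])
        rw [h2]

end Facts

section Statement

variable {M : ℕ} {𝒳 𝒵 : Fin M → Type} {𝒮 : Type}
  [∀ i, Fintype (𝒳 i)] [∀ i, DecidableEq (𝒳 i)]
  [∀ i, Fintype (𝒵 i)] [∀ i, DecidableEq (𝒵 i)] [Fintype 𝒮] [DecidableEq 𝒮]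

/-- Decomposition (Corollary A.3): for nonempty `I` with elements `i(1) < ... < i(m)`,
`I(X_I; Z_I | Z_{Iᶜ}, S) = Σ_{j} I(X_{i(j)}; Z_{i(j)} | Z_{{1..M}\{i(j),...,i(m)}}, S)`.
The set `{i(j),...,i(m)}` consists of the elements of `I` that are `≥ i(j)`. -/
theorem stmt4 (p : (∀ i, 𝒳 i) × 𝒮 → ℝ) (q : ∀ i, 𝒳 i → 𝒵 i → ℝ)
    (hp0 : ∀ a, 0 ≤ p a) (hp1 : ∑ a, p a = 1)
    (hq0 : ∀ i x z, 0 ≤ q i x z) (hq1 : ∀ i x, ∑ z, q i x z = 1)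
    (I : Finset (Fin M)) (hI : I.Nonempty) :
    cmi (jointPMF p q) (XI I) (ZI I) (fun ω => (ZI Iᶜ ω, Sv ω)) =
      ∑ i ∈ I, cmi (jointPMF p q) (fun ω => ω.1.1 i) (fun ω => ω.2 i)
        (fun ω => (ZI (Finset.univ \ I.filter (fun j => i ≤ j)) ω, Sv ω)) := by
  exact decomp p q hq1 I

end Statement
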